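/- arXiv:2603.11972 — 6 statements merged into one kernel-verified Lean document; each statement's English description precedes it below -/
import Mathlib

section
/- Call σ : ℝ → ℝ a Tauber–Wiener function if for every closed interval [a,b] the linear span of {t ↦ σ(w·t − θ) : w, θ ∈ ℝ} is dense in C([a,b], ℝ) with the sup norm. Let X be a Hausdorff locally convex space, σ a continuous Tauber–Wiener function, K ⊆ X compact, g ∈ C(K, ℝ), and ε > 0. Then there exist N ≥ 1, continuous linear functionals f₁, …, f_N ∈ X*, and real numbers c₁, …, c_N, θ₁, …, θ_N such that sup_{x∈K} |g(x) − Σᵢ cᵢ σ(fᵢ(x) − θᵢ)| < ε. -/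
/-- `σ` is a Tauber–Wiener function: for every closed interval `[a, b]`, the linear span of
`{t ↦ σ (w * t - θ) : w, θ ∈ ℝ}` is dense in `C([a, b], ℝ)` with the sup norm. -/
def TauberWiener (σ : ℝ → ℝ) : Prop :=
  ∀ (a b : ℝ) (g : ℝ → ℝ), ContinuousOn g (Set.Icc a b) →
    ∀ ε > 0, ∃ (N : ℕ) (c w θ : Fin N → ℝ),
      ∀ t ∈ Set.Icc a b, |g t - ∑ i, c i * σ (w i * t - θ i)| < ε

/-!
Exponentials `exp ∘ f` of continuous linear functionals span a subalgebra of `C(K, ℝ)`, since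
`exp (f x) * exp (f' x) = exp ((f + f') x)`; it contains the constants and, because the dual
separates points, it separates points of `K`. By Stone–Weierstrass it is dense. Each `exp ∘ f` is
in turn a uniform limit on `K` of networks, by the Tauber–Wiener property of `σ` applied on an
interval containing `f '' K`. Uniform approximability on `K` is preserved by linear combinations
and is transitive, so `g` is a uniform limit of networks.
-/

open Set

namespace Submodule

variable {α 𝕜 E : Type*} [NormedField 𝕜] [SeminormedAddCommGroup E] [NormedSpace 𝕜 E]

def uniformClosureOn (S : Submodule 𝕜 (α → E)) (K : Set α) : Submodule 𝕜 (α → E) where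
  carrier := {F | ∀ ε > 0, ∃ G ∈ S, ∀ x ∈ K, dist (F x) (G x) < ε}
  zero_mem' ε hε := ⟨0, S.zero_mem, fun x _ => by simpa using hε⟩
  add_mem' {F₁ F₂} h₁ h₂ ε hε := by
    obtain ⟨G₁, hG₁, hFG₁⟩ := h₁ (ε / 2) (half_pos hε)
    obtain ⟨G₂, hG₂, hFG₂⟩ := h₂ (ε / 2) (half_pos hε)
    refine ⟨G₁ + G₂, S.add_mem hG₁ hG₂, fun x hx => ?_⟩
    calc dist (F₁ x + F₂ x) (G₁ x + G₂ x) ≤ dist (F₁ x) (G₁ x) + dist (F₂ x) (G₂ x) :=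
          dist_add_add_le _ _ _ _
      _ < ε / 2 + ε / 2 := add_lt_add (hFG₁ x hx) (hFG₂ x hx)
      _ = ε := add_halves ε
  smul_mem' c F h ε hε := by
    set δ := ε / (‖c‖ + 1)
    have hδ : 0 < δ := by positivity
    obtain ⟨G, hG, hFG⟩ := h δ hδ
    refine ⟨c • G, S.smul_mem c hG, fun x hx => ?_⟩
    calc dist (c • F x) (c • G x) = ‖c‖ * dist (F x) (G x) := dist_smul₀ _ _ _
      _ ≤ ‖c‖ * δ := by gcongr; exact (hFG x hx).le
      _ < (‖c‖ + 1) * δ := by gcongr; linarith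
      _ = ε := mul_div_cancel₀ _ (by positivity)

theorem uniformClosureOn_le_uniformClosureOn_of_le {S T : Submodule 𝕜 (α → E)} {K : Set α}
    (h : T ≤ S.uniformClosureOn K) : T.uniformClosureOn K ≤ S.uniformClosureOn K := by
  intro F hF ε hε
  obtain ⟨G, hGT, hFG⟩ := hF (ε / 2) (half_pos hε)
  obtain ⟨H, hHS, hGH⟩ := h hGT (ε / 2) (half_pos hε)
  exact ⟨H, hHS, fun x hx => (dist_triangle _ _ _).trans_lt (by linarith [hFG x hx, hGH x hx])⟩

end Submodule

section

variable {X : Type*} [AddCommGroup X] [Module ℝ X] [TopologicalSpace X]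

variable (X) in
def shallowNetworks (σ : ℝ → ℝ) : Submodule ℝ (X → ℝ) :=
  Submodule.span ℝ (range fun p : (X →L[ℝ] ℝ) × ℝ => fun x => σ (p.1 x - p.2))

theorem mem_shallowNetworks_iff {σ : ℝ → ℝ} {F : X → ℝ} :
    F ∈ shallowNetworks X σ ↔ ∃ (N : ℕ) (f : Fin N → X →L[ℝ] ℝ) (c θ : Fin N → ℝ),
      F = fun x => ∑ i, c i * σ (f i x - θ i) := by
  constructor
  · intro hF
    obtain ⟨N, c, v, rfl⟩ := Submodule.mem_span_set'.mp hF
    choose p hp using fun i => (v i).2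
    refine ⟨N, fun i => (p i).1, c, fun i => (p i).2, ?_⟩
    ext x
    simp [← hp]
  · rintro ⟨N, f, c, θ, rfl⟩
    have hsum : (fun x => ∑ i, c i * σ (f i x - θ i)) = ∑ i, c i • fun x => σ (f i x - θ i) := by
      ext x
      simp
    rw [hsum]
    exact Submodule.sum_mem _ fun i _ =>
      Submodule.smul_mem _ (c i) (Submodule.subset_span (mem_range_self (f i, θ i)))

theorem comp_mem_uniformClosureOn_shallowNetworks {σ : ℝ → ℝ} (hσ : TauberWiener σ)
    {K : Set X} (hK : IsCompact K) {φ : ℝ → ℝ} (hφ : Continuous φ) (f : X →L[ℝ] ℝ) :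
    (fun x => φ (f x)) ∈ (shallowNetworks X σ).uniformClosureOn K := by
  intro ε hε
  obtain ⟨C, hC⟩ := hK.exists_bound_of_continuousOn f.continuous.continuousOn
  obtain ⟨N, c, w, θ, hN⟩ := hσ (-C) C φ hφ.continuousOn ε hε
  refine ⟨_, mem_shallowNetworks_iff.mpr ⟨N, fun i => w i • f, c, θ, rfl⟩, fun x hx => ?_⟩
  simpa [Real.dist_eq] using hN (f x) (abs_le.mp (hC x hx))

variable (X) in
def expSubalgebra : Subalgebra ℝ (X → ℝ) :=
  (Submodule.span ℝ (range fun f : X →L[ℝ] ℝ => fun x => Real.exp (f x))).toSubalgebra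
    (Submodule.subset_span ⟨0, by ext; simp⟩) fun a b ha hb => by
      have hab := Submodule.mul_mem_mul ha hb
      rw [Submodule.span_mul_span] at hab
      refine Submodule.span_mono ?_ hab
      rintro _ ⟨_, ⟨f, rfl⟩, _, ⟨f', rfl⟩, rfl⟩
      exact ⟨f + f', by ext; simp [Real.exp_add]⟩

theorem expSubalgebra_le_uniformClosureOn_shallowNetworks {σ : ℝ → ℝ} (hσ : TauberWiener σ)
    {K : Set X} (hK : IsCompact K) :
    Subalgebra.toSubmodule (expSubalgebra X) ≤ (shallowNetworks X σ).uniformClosureOn K := by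
  rw [expSubalgebra, Submodule.toSubalgebra_toSubmodule, Submodule.span_le]
  rintro _ ⟨f, rfl⟩
  exact comp_mem_uniformClosureOn_shallowNetworks hσ hK Real.continuous_exp f

theorem mem_uniformClosureOn_expSubalgebra [SeparatingDual ℝ X] {K : Set X} (hK : IsCompact K)
    {g : X → ℝ} (hg : ContinuousOn g K) :
    g ∈ (Subalgebra.toSubmodule (expSubalgebra X)).uniformClosureOn K := by
  have : CompactSpace K := isCompact_iff_compactSpace.mp hK
  let restrict : (X → ℝ) →ₐ[ℝ] (K → ℝ) :=
    AlgHom.pi fun k => Pi.evalAlgHom ℝ (fun _ => ℝ) (k : X)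
  let A := ((expSubalgebra X).map restrict).comap (ContinuousMap.coeFnAlgHom ℝ)
  have hA : A.SeparatesPoints := by
    intro x y hxy
    obtain ⟨f, hf⟩ := SeparatingDual.exists_separating_of_ne (R := ℝ) (Subtype.coe_injective.ne hxy)
    refine ⟨_, ⟨⟨fun k => Real.exp (f k), by fun_prop⟩,
      ⟨_, Submodule.subset_span ⟨f, rfl⟩, rfl⟩, rfl⟩, ?_⟩
    simpa using hf
  intro ε hε
  obtain ⟨⟨p, F, hF, hFp⟩, hpg⟩ :=
    ContinuousMap.exists_mem_subalgebra_near_continuousMap_of_separatesPoints A hA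
      ⟨K.domRestrict g, hg.domRestrict⟩ ε hε
  refine ⟨F, hF, fun x hx => ?_⟩
  have hFx : F x = p ⟨x, hx⟩ := congrFun hFp ⟨x, hx⟩
  rw [hFx, dist_comm]
  rw [← dist_eq_norm] at hpg
  exact (ContinuousMap.dist_apply_le_dist ⟨x, hx⟩).trans_lt hpg

end

theorem topological_network_dense_general
    {X : Type*} [AddCommGroup X] [Module ℝ X] [TopologicalSpace X]
    [IsTopologicalAddGroup X] [ContinuousSMul ℝ X] [LocallyConvexSpace ℝ X] [T2Space X]
    (σ : ℝ → ℝ) (hσ : TauberWiener σ)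
    (K : Set X) (hK : IsCompact K)
    (g : X → ℝ) (hg : ContinuousOn g K) (ε : ℝ) (hε : 0 < ε) :
    ∃ (N : ℕ), 1 ≤ N ∧ ∃ (f : Fin N → X →L[ℝ] ℝ) (c θ : Fin N → ℝ),
      ∀ x ∈ K, |g x - ∑ i, c i * σ (f i x - θ i)| < ε := by
  have hg' : g ∈ (shallowNetworks X σ).uniformClosureOn K :=
    Submodule.uniformClosureOn_le_uniformClosureOn_of_le
      (expSubalgebra_le_uniformClosureOn_shallowNetworks hσ hK)
      (mem_uniformClosureOn_expSubalgebra hK hg)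
  obtain ⟨G, hG, hgG⟩ := hg' ε hε
  obtain ⟨N, f, c, θ, rfl⟩ := mem_shallowNetworks_iff.mp hG
  refine ⟨N + 1, Nat.le_add_left 1 N, Fin.cons 0 f, Fin.cons 0 c, Fin.cons 0 θ, fun x hx => ?_⟩
  simpa [Fin.sum_univ_succ, Real.dist_eq] using hgG x hx

/-- Universal approximation by single-hidden-layer topological neural networks on a
Hausdorff locally convex space. -/
theorem topological_network_dense
    {X : Type*} [AddCommGroup X] [Module ℝ X] [TopologicalSpace X]
    [IsTopologicalAddGroup X] [ContinuousSMul ℝ X] [LocallyConvexSpace ℝ X] [T2Space X]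
    (σ : ℝ → ℝ) (hσcont : Continuous σ) (hσ : TauberWiener σ)
    (K : Set X) (hK : IsCompact K)
    (g : X → ℝ) (hg : ContinuousOn g K) (ε : ℝ) (hε : 0 < ε) :
    ∃ (N : ℕ), 1 ≤ N ∧ ∃ (f : Fin N → X →L[ℝ] ℝ) (c θ : Fin N → ℝ),
      ∀ x ∈ K, |g x - ∑ i, c i * σ (f i x - θ i)| < ε :=
  topological_network_dense_general σ hσ K hK g hg ε hε
end

section
/- Let K be a compact metric space, μ a finite signed Borel measure on K, and V ⊆ C(K, ℝ) a compact subset. Then for every δ > 0 there exist finitely many points x₁, …, x_k ∈ K and real coefficients ξ₁, …, ξ_k such that for all u ∈ V, |∫_K u dμ − Σ_j ξ_j u(x_j)| < δ. -/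
/-!
A compact `V ⊆ C(K, ℝ)` is uniformly equicontinuous, so some `r > 0` makes every `u ∈ V` vary
by at most `ε` on sets of diameter `< r`. Quantize `K` by a measurable map `c : K → Fin k` with
`dist (x (c t)) t < r`: replacing `u` by the step function `u ∘ x ∘ c` costs at most `ε ν(K)`
in the integral against each Jordan part `ν` of `μ`, and the step function integrates to
`∑ j, ν (c⁻¹' {j}) * u (x j)`.
-/

open MeasureTheory Set

section QuantizedIntegral

variable {α ι E : Type*} [MeasurableSpace α] [Fintype ι] [MeasurableSpace ι]
  [MeasurableSingletonClass ι] [NormedAddCommGroup E] [NormedSpace ℝ E]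
  [CompleteSpace E] (μ : Measure α) [IsFiniteMeasure μ] {c : α → ι}

theorem integral_comp_eq_sum (hc : Measurable c) (w : ι → E) :
    ∫ a, w (c a) ∂μ = ∑ i, μ.real (c ⁻¹' {i}) • w i := by
  rw [← integral_map hc.aemeasurable .of_discrete, integral_fintype .of_finite]
  simp_rw [map_measureReal_apply hc (measurableSet_singleton _)]

theorem norm_integral_sub_sum_le (hc : Measurable c) {u : α → E} (hu : Integrable u μ)
    {w : ι → E} {ε : ℝ} (huw : ∀ a, ‖u a - w (c a)‖ ≤ ε) :
    ‖∫ a, u a ∂μ - ∑ i, μ.real (c ⁻¹' {i}) • w i‖ ≤ ε * μ.real univ := by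
  have hwc : Integrable (fun a => w (c a)) μ := Integrable.of_finite.comp_measurable hc
  rw [← integral_comp_eq_sum μ hc, ← integral_sub hu hwc]
  exact norm_integral_le_of_norm_le_const (.of_forall huw)

end QuantizedIntegral

theorem exists_measurable_quantization {K : Type*} [PseudoMetricSpace K] [CompactSpace K]
    [MeasurableSpace K] [OpensMeasurableSpace K] {r : ℝ} (hr : 0 < r) :
    ∃ (k : ℕ) (x : Fin k → K) (c : K → Fin k), Measurable c ∧ ∀ t, dist (x (c t)) t < r := by
  cases isEmpty_or_nonempty K
  · exact ⟨0, Fin.elim0, isEmptyElim, measurable_of_subsingleton_codomain _, isEmptyElim⟩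
  -- `c t` is the nearest of the first `N + 1` points of a dense sequence, with `N` chosen by
  -- compactness so that these points form an `r`-net.
  set e := TopologicalSpace.denseSeq K
  obtain ⟨s, hs⟩ := isCompact_univ.elim_finite_subcover (fun n => Metric.ball (e n) r)
    (fun _ => Metric.isOpen_ball) fun t _ => by
      obtain ⟨n, hn⟩ := (TopologicalSpace.denseRange_denseSeq K).exists_dist_lt t hr
      exact mem_iUnion.2 ⟨n, hn⟩
  set N := s.sup id
  let c : K → Fin (N + 1) := fun t =>
    ⟨SimpleFunc.nearestPtInd e N t, Nat.lt_succ_of_le (SimpleFunc.nearestPtInd_le e N t)⟩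
  refine ⟨N + 1, fun j => e j, c, measurable_to_countable' fun j => ?_, fun t => ?_⟩
  · convert (SimpleFunc.nearestPtInd e N).measurableSet_preimage {(j : ℕ)} using 1
    ext t
    simp [c, Fin.ext_iff]
  · obtain ⟨n, hns, hn⟩ := mem_iUnion₂.1 (hs (mem_univ t))
    rw [← edist_lt_ofReal]
    calc edist (SimpleFunc.nearestPt e N t) t ≤ edist (e n) t :=
          SimpleFunc.edist_nearestPt_le e t (Finset.le_sup (f := id) hns)
      _ < ENNReal.ofReal r := edist_lt_ofReal.2 (by rwa [dist_comm])

theorem IsCompact.uniformEquicontinuous_coe {K β : Type*} [PseudoMetricSpace K] [CompactSpace K]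
    [PseudoMetricSpace β] {V : Set C(K, β)} (hV : IsCompact V) :
    UniformEquicontinuous fun u : V => (u : K → β) := by
  have : CompactSpace V := isCompact_iff_compactSpace.mp hV
  have heval : UniformContinuous fun p : V × K => (p.1 : C(K, β)) p.2 :=
    CompactSpace.uniformContinuous_of_continuous
      (continuous_eval.comp (continuous_subtype_val.prodMap continuous_id))
  rw [Metric.uniformContinuous_iff] at heval
  rw [Metric.uniformEquicontinuous_iff]
  intro ε hε
  obtain ⟨r, hr, h⟩ := heval ε hε
  refine ⟨r, hr, fun a b hab u => h (a := (u, a)) (b := (u, b)) ?_⟩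
  simpa [Prod.dist_eq] using hab

/-- Integration against a finite signed Borel measure is uniformly approximated, on a
compact subset `V` of `C(K, ℝ)`, by finite linear combinations of point evaluations. -/
theorem signed_integral_approx_by_point_evaluations
    {K : Type*} [MetricSpace K] [CompactSpace K]
    [MeasurableSpace K] [BorelSpace K]
    (μ : SignedMeasure K)
    (V : Set C(K, ℝ)) (hV : IsCompact V)
    (δ : ℝ) (hδ : 0 < δ) :
    ∃ (k : ℕ) (x : Fin k → K) (ξ : Fin k → ℝ),
      ∀ u ∈ V,
        |((∫ t, u t ∂μ.toJordanDecomposition.posPart) -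
            (∫ t, u t ∂μ.toJordanDecomposition.negPart)) -
          ∑ j, ξ j * u (x j)| < δ := by
  set P := μ.toJordanDecomposition.posPart
  set Q := μ.toJordanDecomposition.negPart
  set ε := δ / (P.real univ + Q.real univ + 1)
  have hε : ε * (P.real univ + Q.real univ + 1) = δ := div_mul_cancel₀ _ (by positivity)
  have hε_pos : 0 < ε := by positivity
  obtain ⟨r, hr, hVr⟩ := Metric.uniformEquicontinuous_iff.1 hV.uniformEquicontinuous_coe ε hε_pos
  obtain ⟨k, x, c, hc, hxc⟩ := exists_measurable_quantization (K := K) hr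
  refine ⟨k, x, fun j => P.real (c ⁻¹' {j}) - Q.real (c ⁻¹' {j}), fun u hu => ?_⟩
  have hclose (t : K) : ‖u t - u (x (c t))‖ ≤ ε := by
    rw [← dist_eq_norm, dist_comm]
    exact (hVr _ _ (hxc t) ⟨u, hu⟩).le
  have hu_int (ν : Measure K) [IsFiniteMeasure ν] : Integrable u ν :=
    u.continuous.integrable_of_hasCompactSupport (.of_compactSpace _)
  have hP := norm_integral_sub_sum_le P hc (hu_int P) (w := fun j => u (x j)) hclose
  have hQ := norm_integral_sub_sum_le Q hc (hu_int Q) (w := fun j => u (x j)) hclose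
  calc _ = ‖(∫ t, u t ∂P - ∑ j, P.real (c ⁻¹' {j}) • u (x j)) -
          (∫ t, u t ∂Q - ∑ j, Q.real (c ⁻¹' {j}) • u (x j))‖ := by
        simp only [Real.norm_eq_abs, smul_eq_mul, sub_mul, Finset.sum_sub_distrib]
        ring_nf
    _ ≤ ε * P.real univ + ε * Q.real univ := (norm_sub_le _ _).trans (add_le_add hP hQ)
    _ < δ := by linarith
end

section
/- (Chen–Chen operator approximation for functionals) Let K be a compact metric space, V ⊆ C(K, ℝ) compact, σ a continuous Tauber–Wiener function, f : V → ℝ continuous, and ε > 0. Then there exist integers N, k ≥ 1, points x₁, …, x_k ∈ K, and reals cᵢ, θᵢ, ξᵢⱼ (1 ≤ i ≤ N, 1 ≤ j ≤ k) such that for all u ∈ V, |f(u) − Σᵢ cᵢ σ(Σⱼ ξᵢⱼ u(xⱼ) − θᵢ)| < ε. -/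
open Real Submodule

noncomputable def cosMap : C(ℝ, ℝ) := ⟨cos, continuous_cos⟩

@[simp] theorem cosMap_apply (t : ℝ) : cosMap t = cos t := rfl

section RidgeSpan

variable {X : Type*} [TopologicalSpace X]

def ridgeSpan (φ : C(ℝ, ℝ)) (L : Submodule ℝ C(X, ℝ)) : Submodule ℝ C(X, ℝ) :=
  span ℝ {h | ∃ ℓ ∈ L, ∃ θ : ℝ, h = φ.comp (ℓ - .const X θ)}

variable {L : Submodule ℝ C(X, ℝ)}

theorem comp_sub_const_mem_ridgeSpan (φ : C(ℝ, ℝ)) {ℓ : C(X, ℝ)} (hℓ : ℓ ∈ L) (θ : ℝ) :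
    φ.comp (ℓ - .const X θ) ∈ ridgeSpan φ L :=
  subset_span ⟨ℓ, hℓ, θ, rfl⟩

theorem cosMap_comp_mul_cosMap_comp (ℓ ℓ' : C(X, ℝ)) (θ θ' : ℝ) :
    cosMap.comp (ℓ - .const X θ) * cosMap.comp (ℓ' - .const X θ') =
      (1 / 2 : ℝ) • cosMap.comp ((ℓ + ℓ') - .const X (θ + θ')) +
      (1 / 2 : ℝ) • cosMap.comp ((ℓ - ℓ') - .const X (θ - θ')) := by
  ext x
  simp only [ContinuousMap.mul_apply, ContinuousMap.comp_apply, ContinuousMap.sub_apply,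
    ContinuousMap.add_apply, ContinuousMap.const_apply, ContinuousMap.smul_apply, cosMap_apply,
    smul_eq_mul]
  rw [show ℓ x + ℓ' x - (θ + θ') = (ℓ x - θ) + (ℓ' x - θ') by ring,
    show ℓ x - ℓ' x - (θ - θ') = (ℓ x - θ) - (ℓ' x - θ') by ring, cos_add (ℓ x - θ),
    cos_sub (ℓ x - θ)]
  ring

theorem mul_mem_ridgeSpan_cosMap {f g : C(X, ℝ)} (hf : f ∈ ridgeSpan cosMap L)
    (hg : g ∈ ridgeSpan cosMap L) : f * g ∈ ridgeSpan cosMap L := by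
  refine (span_mul_span ℝ _ _).le.trans (span_le.2 ?_) (mul_mem_mul hf hg)
  rintro _ ⟨_, ⟨ℓ, hℓ, θ, rfl⟩, _, ⟨ℓ', hℓ', θ', rfl⟩, rfl⟩
  change _ * _ ∈ _
  rw [cosMap_comp_mul_cosMap_comp]
  exact add_mem (smul_mem _ _ (comp_sub_const_mem_ridgeSpan _ (add_mem hℓ hℓ') _))
    (smul_mem _ _ (comp_sub_const_mem_ridgeSpan _ (sub_mem hℓ hℓ') _))

theorem one_mem_ridgeSpan_cosMap : (1 : C(X, ℝ)) ∈ ridgeSpan cosMap L := by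
  convert comp_sub_const_mem_ridgeSpan cosMap L.zero_mem 0
  ext; simp

theorem exists_sin_mul_ne {a b : ℝ} (h : a ≠ b) : ∃ t : ℝ, sin (t * a) ≠ sin (t * b) := by
  set t := (|a| + |b| + 1)⁻¹
  have ht : 0 < t := by positivity
  have hmem : ∀ c, |c| ≤ |a| + |b| → t * c ∈ Set.Icc (-(π / 2)) (π / 2) := by
    intro c hc
    have : |t * c| ≤ 1 := by
      rw [abs_mul, abs_of_pos ht, inv_mul_le_one₀ (by positivity)]
      linarith
    rw [Set.mem_Icc, ← abs_le]
    linarith [pi_gt_three]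
  refine ⟨t, fun hsin => h ?_⟩
  have := injOn_sin (hmem a (by linarith [abs_nonneg b])) (hmem b (by linarith [abs_nonneg a])) hsin
  exact mul_left_cancel₀ ht.ne' this

theorem topologicalClosure_ridgeSpan_cosMap [CompactSpace X]
    (hL : ∀ x y, x ≠ y → ∃ ℓ ∈ L, ℓ x ≠ ℓ y) :
    (ridgeSpan cosMap L).topologicalClosure = ⊤ := by
  let A := (ridgeSpan cosMap L).toSubalgebra one_mem_ridgeSpan_cosMap
    fun _ _ => mul_mem_ridgeSpan_cosMap
  have hA : A.SeparatesPoints := by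
    intro x y hxy
    obtain ⟨ℓ, hℓ, hne⟩ := hL x y hxy
    obtain ⟨t, ht⟩ := exists_sin_mul_ne hne
    have hmem : cosMap.comp (t • ℓ - .const X (π / 2)) ∈ A :=
      comp_sub_const_mem_ridgeSpan _ (L.smul_mem t hℓ) _
    refine ⟨_, ⟨_, hmem, rfl⟩, ?_⟩
    change cos (t * ℓ x - π / 2) ≠ cos (t * ℓ y - π / 2)
    rwa [cos_sub_pi_div_two, cos_sub_pi_div_two]
  have hdense := ContinuousMap.subalgebra_topologicalClosure_eq_top_of_separatesPoints A hA
  refine eq_top_iff.2 fun f _ => ?_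
  exact (hdense ▸ Algebra.mem_top : f ∈ A.topologicalClosure)

variable [CompactSpace X] {σ : C(ℝ, ℝ)}

theorem TauberWiener.comp_mem_topologicalClosure_ridgeSpan (hσ : TauberWiener σ) (g : C(ℝ, ℝ))
    {ℓ : C(X, ℝ)} (hℓ : ℓ ∈ L) : g.comp ℓ ∈ (ridgeSpan σ L).topologicalClosure := by
  rw [← SetLike.mem_coe, topologicalClosure_coe, Metric.mem_closure_iff]
  intro ε hε
  obtain ⟨N, c, w, θ, hnet⟩ :=
    hσ (-‖ℓ‖) ‖ℓ‖ g g.continuous.continuousOn (ε / 2) (half_pos hε)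
  refine ⟨∑ i, c i • σ.comp (w i • ℓ - .const X (θ i)),
    sum_mem fun i _ => smul_mem _ _ (comp_sub_const_mem_ridgeSpan _ (L.smul_mem _ hℓ) _), ?_⟩
  refine ((ContinuousMap.dist_le (half_pos hε).le).2 fun x => ?_).trans_lt (half_lt_self hε)
  have hx : ℓ x ∈ Set.Icc (-‖ℓ‖) ‖ℓ‖ := abs_le.1 (ℓ.norm_coe_le_norm x)
  simpa [Real.dist_eq] using (hnet (ℓ x) hx).le

theorem TauberWiener.topologicalClosure_ridgeSpan (hσ : TauberWiener σ)
    (hL : ∀ x y, x ≠ y → ∃ ℓ ∈ L, ℓ x ≠ ℓ y) :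
    (ridgeSpan σ L).topologicalClosure = ⊤ := by
  refine eq_top_iff.2 ((topologicalClosure_ridgeSpan_cosMap hL).ge.trans
    (topologicalClosure_minimal _ (span_le.2 ?_) (isClosed_topologicalClosure _)))
  rintro _ ⟨ℓ, hℓ, θ, rfl⟩
  have hcomp : cosMap.comp (ℓ - .const X θ) = (cosMap.comp (.id ℝ - .const ℝ θ)).comp ℓ := by
    ext; rfl
  rw [SetLike.mem_coe, hcomp]
  exact hσ.comp_mem_topologicalClosure_ridgeSpan _ hℓ

end RidgeSpan

section PointEvaluation

variable {K : Type*} [TopologicalSpace K] (V : Set C(K, ℝ))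

def pointEval (p : K) : C(V, ℝ) :=
  ⟨fun u => (u : C(K, ℝ)) p, (continuous_eval_const p).comp continuous_subtype_val⟩

noncomputable def pointEvalSpan : Submodule ℝ C(V, ℝ) :=
  LinearMap.range (Finsupp.linearCombination ℝ (pointEval V))

variable {V}

theorem linearCombination_pointEval_apply (a : K →₀ ℝ) (u : V) :
    Finsupp.linearCombination ℝ (pointEval V) a u = a.sum fun p r => r * (u : C(K, ℝ)) p := by
  rw [Finsupp.linearCombination_apply, Finsupp.sum, ContinuousMap.coe_sum, Finset.sum_apply,
    Finsupp.sum]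
  rfl

theorem pointEvalSpan_separates (u v : V) (huv : u ≠ v) :
    ∃ ℓ ∈ pointEvalSpan V, ℓ u ≠ ℓ v := by
  obtain ⟨p, hp⟩ := DFunLike.ne_iff.1 (Subtype.coe_ne_coe.2 huv)
  refine ⟨pointEval V p, ⟨Finsupp.single p 1, ?_⟩, hp⟩
  simp

theorem exists_of_mem_ridgeSpan_pointEvalSpan {σ : C(ℝ, ℝ)} {F : C(V, ℝ)}
    (hF : F ∈ ridgeSpan σ (pointEvalSpan V)) :
    ∃ (n : ℕ) (c θ : Fin n → ℝ) (a : Fin n → K →₀ ℝ), ∀ u : V,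
      F u = ∑ i, c i * σ ((a i).sum (fun p r => r * (u : C(K, ℝ)) p) - θ i) := by
  obtain ⟨n, c, h, rfl⟩ := mem_span_set'.1 hF
  choose ℓ hℓ θ hh using fun i => (h i).2
  choose a ha using hℓ
  refine ⟨n, c, θ, a, fun u => ?_⟩
  simp only [ContinuousMap.coe_sum, Finset.sum_apply, ContinuousMap.smul_apply, hh, ← ha,
    ContinuousMap.comp_apply, ContinuousMap.sub_apply, ContinuousMap.const_apply,
    linearCombination_pointEval_apply, smul_eq_mul]

theorem TauberWiener.topologicalClosure_ridgeSpan_pointEvalSpan [CompactSpace V] {σ : C(ℝ, ℝ)}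
    (hσ : TauberWiener σ) : (ridgeSpan σ (pointEvalSpan V)).topologicalClosure = ⊤ :=
  hσ.topologicalClosure_ridgeSpan pointEvalSpan_separates

end PointEvaluation

theorem Finsupp.exists_sum_eq_sum_fin {K ι : Type*} [Fintype ι] [Nonempty K] (a : ι → K →₀ ℝ) :
    ∃ (k : ℕ), 1 ≤ k ∧ ∃ (x : Fin k → K) (ξ : ι → Fin k → ℝ), ∀ i (u : K → ℝ),
      (a i).sum (fun p r => r * u p) = ∑ j, ξ i j * u (x j) := by
  classical
  let S := insert (Classical.arbitrary K) (Finset.univ.biUnion fun i => (a i).support)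
  refine ⟨S.card, Finset.card_pos.2 (Finset.insert_nonempty _ _),
    fun j => S.equivFin.symm j, fun i j => a i (S.equivFin.symm j), fun i u => ?_⟩
  have hsupp : (a i).support ⊆ S :=
    (Finset.subset_biUnion_of_mem (fun i => (a i).support) (Finset.mem_univ i)).trans
      (Finset.subset_insert _ _)
  rw [Finsupp.sum_of_support_subset _ hsupp (fun p r => r * u p) fun _ _ => zero_mul _,
    ← Finset.sum_coe_sort S, ← S.equivFin.symm.sum_comp]

theorem chen_chen_functional_approximation_general
    {K : Type*} [MetricSpace K] [Nonempty K]
    (σ : ℝ → ℝ) (hσcont : Continuous σ) (hσ : TauberWiener σ)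
    (V : Set C(K, ℝ)) (hV : IsCompact V)
    (f : C(K, ℝ) → ℝ) (hf : ContinuousOn f V)
    (ε : ℝ) (hε : 0 < ε) :
    ∃ (N k : ℕ), 1 ≤ N ∧ 1 ≤ k ∧
      ∃ (x : Fin k → K) (c θ : Fin N → ℝ) (ξ : Fin N → Fin k → ℝ),
        ∀ u ∈ V,
          |f u - ∑ i, c i * σ (∑ j, ξ i j * u (x j) - θ i)| < ε := by
  have : CompactSpace V := isCompact_iff_compactSpace.1 hV
  let σ' : C(ℝ, ℝ) := ⟨σ, hσcont⟩
  have hf_mem : (⟨V.domRestrict f, hf.domRestrict⟩ : C(V, ℝ)) ∈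
      closure (ridgeSpan σ' (pointEvalSpan V) : Set C(V, ℝ)) := by
    rw [← topologicalClosure_coe, TauberWiener.topologicalClosure_ridgeSpan_pointEvalSpan hσ]
    trivial
  obtain ⟨F, hF, hfF⟩ := Metric.mem_closure_iff.1 hf_mem ε hε
  obtain ⟨n, c, θ, a, hFa⟩ := exists_of_mem_ridgeSpan_pointEvalSpan hF
  obtain ⟨k, hk, x, ξ, hξ⟩ := Finsupp.exists_sum_eq_sum_fin a
  -- a leading neuron with output weight `0` makes `N ≥ 1`
  refine ⟨n + 1, k, n.succ_pos, hk, x, Fin.cons 0 c, Fin.cons 0 θ, Fin.cons 0 ξ, fun u hu => ?_⟩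
  have := (ContinuousMap.dist_apply_le_dist ⟨u, hu⟩).trans_lt hfF
  rw [hFa, Real.dist_eq] at this
  simpa [σ', Fin.sum_univ_succ, ← hξ] using this

/-- Chen–Chen operator approximation theorem for continuous functionals on a compact
subset of `C(K, ℝ)`. -/
theorem chen_chen_functional_approximation
    {K : Type*} [MetricSpace K] [CompactSpace K] [Nonempty K]
    (σ : ℝ → ℝ) (hσcont : Continuous σ) (hσ : TauberWiener σ)
    (V : Set C(K, ℝ)) (hV : IsCompact V)
    (f : C(K, ℝ) → ℝ) (hf : ContinuousOn f V)
    (ε : ℝ) (hε : 0 < ε) :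
    ∃ (N k : ℕ), 1 ≤ N ∧ 1 ≤ k ∧
      ∃ (x : Fin k → K) (c θ : Fin N → ℝ) (ξ : Fin N → Fin k → ℝ),
        ∀ u ∈ V,
          |f u - ∑ i, c i * σ (∑ j, ξ i j * u (x j) - θ i)| < ε :=
  chen_chen_functional_approximation_general σ hσcont hσ V hV f hf ε hε
end

section
/- (Main operator approximation theorem) Let X be a Hausdorff locally convex topological vector space, V ⊆ X compact, K ⊂ ℝ^d compact, G : V → C(K, ℝ^m) continuous (C(K, ℝ^m) with sup norm), and σ a continuous Tauber–Wiener function. Then for every ε > 0 there exist N ≥ 1, vectors ω_k ∈ ℝ^d and reals ζ_k, and maps a_k : X → ℝ^m each of whose components is a finite sum of terms c·σ(f(u) − θ) with f ∈ X*, such that sup_{u∈V} sup_{y∈K} ‖G(u)(y) − Σ_{k=1}^N a_k(u) σ(ω_k·y + ζ_k)‖ < ε. -/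
open Matrix

/-!
By Stone–Weierstrass, the span of the functions `(u, y) ↦ exp (f u + ω ⬝ᵥ y)` with `f ∈ X*` is
dense in `C(V × K, ℝ)`: they form a multiplicative monoid, and they separate points because `X*`
separates the points of `X` (Hahn–Banach). Each of them is a product `exp (f u) * exp (ω ⬝ᵥ y)`
of two functions of a single real feature, and the Tauber–Wiener property approximates either
factor uniformly by sums of neurons `σ (w * f u - θ)`, resp. `σ (w * ω ⬝ᵥ y + ζ)`. By continuity
of multiplication, sums of products of such neurons are therefore dense as well; expanding one
that approximates a component of `G` gives the required expansion.
-/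

open Set Submodule

section Neurons

variable {α β P Q : Type*} [TopologicalSpace α] [TopologicalSpace β]
  [AddCommGroup P] [Module ℝ P] [AddCommGroup Q] [Module ℝ Q]

def neurons (σ : C(ℝ, ℝ)) (Λ : P →ₗ[ℝ] C(α, ℝ)) : Set C(α, ℝ) :=
  range fun pb : P × ℝ => σ.comp (Λ pb.1 + .const α pb.2)

theorem TauberWiener.comp_mem_closure_span_neurons [CompactSpace α] {σ : C(ℝ, ℝ)}
    (hσ : TauberWiener σ) (Λ : P →ₗ[ℝ] C(α, ℝ)) (p : P) (g : C(ℝ, ℝ)) :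
    g.comp (Λ p) ∈ closure (span ℝ (neurons σ Λ) : Set C(α, ℝ)) := by
  rw [Metric.mem_closure_iff]
  intro ε hε
  obtain ⟨N, c, w, θ, hg⟩ := hσ (-‖Λ p‖) ‖Λ p‖ g g.continuous.continuousOn ε hε
  refine ⟨∑ i, c i • σ.comp (Λ (w i • p) + .const α (-θ i)),
    sum_mem fun i _ => smul_mem _ _ (subset_span ⟨(w i • p, -θ i), rfl⟩), ?_⟩
  rw [dist_eq_norm, ContinuousMap.norm_lt_iff _ hε]
  intro x
  simpa [← sub_eq_add_neg] using hg _ (abs_le.mp ((Λ p).norm_coe_le_norm x))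

theorem prodMul_mem_closure_span_image2 [CompactSpace α] [CompactSpace β]
    {A : Set C(α, ℝ)} {B : Set C(β, ℝ)} {p : C(α, ℝ)} {q : C(β, ℝ)}
    (hp : p ∈ closure (span ℝ A : Set C(α, ℝ))) (hq : q ∈ closure (span ℝ B : Set C(β, ℝ))) :
    p.prodMul q ∈ closure (span ℝ (image2 (fun a b => a.prodMul b) A B) : Set C(α × β, ℝ)) := by
  have hcont : Continuous (Function.uncurry fun (a : C(α, ℝ)) (b : C(β, ℝ)) => a.prodMul b) := by
    simp only [Function.uncurry_def, ContinuousMap.prodMul_def]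
    exact ((ContinuousMap.continuous_precomp _).comp continuous_fst).mul
      ((ContinuousMap.continuous_precomp _).comp continuous_snd)
  refine map_mem_closure₂ (f := fun a b => a.prodMul b) hcont hp hq fun a ha b hb => ?_
  rw [SetLike.mem_coe, ← map₂_span_span]
  exact apply_mem_map₂ _ ha hb

noncomputable def expContinuousMap : C(ℝ, ℝ) := ⟨Real.exp, Real.continuous_exp⟩

variable (Λ₁ : P →ₗ[ℝ] C(α, ℝ)) (Λ₂ : Q →ₗ[ℝ] C(β, ℝ))

noncomputable def expProdMonoid : Submonoid C(α × β, ℝ) where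
  carrier := range fun pq : P × Q =>
    (expContinuousMap.comp (Λ₁ pq.1)).prodMul (expContinuousMap.comp (Λ₂ pq.2))
  mul_mem' := by
    rintro _ _ ⟨⟨p, q⟩, rfl⟩ ⟨⟨p', q'⟩, rfl⟩
    refine ⟨(p + p', q + q'), ?_⟩
    ext z
    simp [expContinuousMap, Real.exp_add]
    ring
  one_mem' := ⟨(0, 0), by ext; simp [expContinuousMap]⟩

variable {Λ₁ Λ₂}

theorem prodMul_exp_mem_expProdMonoid (p : P) (q : Q) :
    (expContinuousMap.comp (Λ₁ p)).prodMul (expContinuousMap.comp (Λ₂ q)) ∈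
      expProdMonoid Λ₁ Λ₂ :=
  mem_range_self (p, q)

theorem separatesPoints_adjoin_expProdMonoid
    (h₁ : (range fun p => ⇑(Λ₁ p)).SeparatesPoints)
    (h₂ : (range fun q => ⇑(Λ₂ q)).SeparatesPoints) :
    (Algebra.adjoin ℝ (expProdMonoid Λ₁ Λ₂ : Set C(α × β, ℝ))).SeparatesPoints := by
  rintro ⟨x, y⟩ ⟨x', y'⟩ hne
  by_cases hx : x = x'
  · obtain ⟨_, ⟨q, rfl⟩, hq⟩ := h₂ (show y ≠ y' from fun hy => hne (by rw [hx, hy]))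
    exact ⟨_, ⟨_, Algebra.subset_adjoin (prodMul_exp_mem_expProdMonoid 0 q), rfl⟩,
      by simpa [expContinuousMap, hx] using hq⟩
  · obtain ⟨_, ⟨p, rfl⟩, hp⟩ := h₁ hx
    exact ⟨_, ⟨_, Algebra.subset_adjoin (prodMul_exp_mem_expProdMonoid p 0), rfl⟩,
      by simpa [expContinuousMap] using hp⟩

theorem dense_span_image2_prodMul_neurons [CompactSpace α] [CompactSpace β] {σ : C(ℝ, ℝ)}
    (hσ : TauberWiener σ) (h₁ : (range fun p => ⇑(Λ₁ p)).SeparatesPoints)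
    (h₂ : (range fun q => ⇑(Λ₂ q)).SeparatesPoints) :
    Dense (span ℝ (image2 (fun a b => a.prodMul b) (neurons σ Λ₁) (neurons σ Λ₂)) :
      Set C(α × β, ℝ)) := by
  set D := span ℝ (image2 (fun a b => a.prodMul b) (neurons σ Λ₁) (neurons σ Λ₂))
  have hexp : (expProdMonoid Λ₁ Λ₂ : Set C(α × β, ℝ)) ⊆ D.topologicalClosure := by
    rintro _ ⟨⟨p, q⟩, rfl⟩
    rw [SetLike.mem_coe, ← SetLike.mem_coe, topologicalClosure_coe]
    exact prodMul_mem_closure_span_image2 (hσ.comp_mem_closure_span_neurons Λ₁ p _)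
      (hσ.comp_mem_closure_span_neurons Λ₂ q _)
  have hadjoin : Subalgebra.toSubmodule (Algebra.adjoin ℝ (expProdMonoid Λ₁ Λ₂ : Set _)) ≤
      D.topologicalClosure := by
    rw [Algebra.adjoin_eq_span, Submonoid.closure_eq]
    exact span_le.2 hexp
  have hSW := ContinuousMap.subalgebra_topologicalClosure_eq_top_of_separatesPoints _
    (separatesPoints_adjoin_expProdMonoid h₁ h₂)
  rw [dense_iff_closure_eq, eq_univ_iff_forall]
  intro h
  have hmem : h ∈ closure (Algebra.adjoin ℝ (expProdMonoid Λ₁ Λ₂ : Set C(α × β, ℝ)) :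
      Set C(α × β, ℝ)) := by
    rw [← Subalgebra.topologicalClosure_coe, hSW]
    trivial
  rw [← topologicalClosure_coe]
  exact closure_minimal hadjoin D.isClosed_topologicalClosure hmem

end Neurons

section Operator

variable {X : Type*} [AddCommGroup X] [Module ℝ X] [TopologicalSpace X] {d : ℕ}

def restrictDual (V : Set X) : (X →L[ℝ] ℝ) →ₗ[ℝ] C(V, ℝ) where
  toFun f := ⟨fun u => f u, by fun_prop⟩
  map_add' _ _ := rfl
  map_smul' _ _ := rfl

def dotProductOn (K : Set (Fin d → ℝ)) : (Fin d → ℝ) →ₗ[ℝ] C(K, ℝ) where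
  toFun ω := ⟨fun y => ω ⬝ᵥ (y : Fin d → ℝ), by fun_prop⟩
  map_add' _ _ := by ext; simp [add_dotProduct]
  map_smul' _ _ := by ext; simp [smul_dotProduct]

theorem separatesPoints_restrictDual [SeparatingDual ℝ X] (V : Set X) :
    (range fun f => ⇑(restrictDual V f)).SeparatesPoints := by
  intro u u' h
  obtain ⟨f, hf⟩ := SeparatingDual.exists_separating_of_ne (R := ℝ) (Subtype.coe_ne_coe.2 h)
  exact ⟨_, mem_range_self f, hf⟩

theorem separatesPoints_dotProductOn (K : Set (Fin d → ℝ)) :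
    (range fun ω => ⇑(dotProductOn K ω)).SeparatesPoints := by
  intro y y' h
  obtain ⟨i, hi⟩ := Function.ne_iff.1 (Subtype.coe_ne_coe.2 h)
  exact ⟨_, mem_range_self (Pi.single i 1), by simpa [dotProductOn] using hi⟩

theorem exists_sum_neuron_mul_ridge_near [SeparatingDual ℝ X] {V : Set X} [CompactSpace V]
    {K : Set (Fin d → ℝ)} [CompactSpace K] {σ : C(ℝ, ℝ)} (hσ : TauberWiener σ)
    (h : C(V × K, ℝ)) {ε : ℝ} (hε : 0 < ε) :
    ∃ (n : ℕ) (c : Fin n → ℝ) (f : Fin n → X →L[ℝ] ℝ) (θ : Fin n → ℝ)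
      (ω : Fin n → Fin d → ℝ) (ζ : Fin n → ℝ), ∀ u y,
        |h (u, y) - ∑ j, c j * σ (f j u - θ j) * σ (ω j ⬝ᵥ (y : Fin d → ℝ) + ζ j)| < ε := by
  obtain ⟨s, hs, hhs⟩ := (dense_span_image2_prodMul_neurons hσ (separatesPoints_restrictDual V)
    (separatesPoints_dotProductOn K)).exists_dist_lt h hε
  obtain ⟨n, c, g, rfl⟩ := mem_span_set'.1 hs
  choose p hp q hq hpq using fun j => (g j).2
  choose fb hfb using hp
  choose ωζ hωζ using hq
  refine ⟨n, c, fun j => (fb j).1, fun j => -(fb j).2, fun j => (ωζ j).1, fun j => (ωζ j).2,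
    fun u y => ?_⟩
  rw [dist_eq_norm, ContinuousMap.norm_lt_iff _ hε] at hhs
  simpa [← hpq, ← hfb, ← hωζ, restrictDual, dotProductOn, mul_assoc] using hhs (u, y)

def IsTopNeuralNet (σ : ℝ → ℝ) (b : X → ℝ) : Prop :=
  ∃ (n : ℕ) (f : Fin n → X →L[ℝ] ℝ) (c θ : Fin n → ℝ), ∀ u, b u = ∑ i, c i * σ (f i u - θ i)

theorem exists_deepONet_near [SeparatingDual ℝ X] {V : Set X} [CompactSpace V]
    {K : Set (Fin d → ℝ)} [CompactSpace K] {m : ℕ} {σ : C(ℝ, ℝ)} (hσ : TauberWiener σ)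
    (F : C(V × K, Fin m → ℝ)) {ε : ℝ} (hε : 0 < ε) :
    ∃ (N : ℕ) (ω : Fin N → Fin d → ℝ) (ζ : Fin N → ℝ) (a : Fin N → X → Fin m → ℝ),
      (∀ k r, IsTopNeuralNet σ fun u => a k u r) ∧
      ∀ u y, ‖F (u, y) - ∑ k, σ (ω k ⬝ᵥ (y : Fin d → ℝ) + ζ k) • a k u‖ < ε := by
  choose n c f θ ω ζ hn using fun r => exists_sum_neuron_mul_ridge_near hσ
    ⟨fun z => F z r, (continuous_apply r).comp F.continuous⟩ hε
  let ι := Σ r, Fin (n r)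
  let e := (Fintype.equivFin ι).symm
  let a : ι → X → Fin m → ℝ := fun i u =>
    (c i.1 i.2 * σ (f i.1 i.2 u - θ i.1 i.2)) • (Pi.single i.1 1 : Fin m → ℝ)
  refine ⟨_, fun k => ω (e k).1 (e k).2, fun k => ζ (e k).1 (e k).2, fun k => a (e k),
    fun k r => ?_, fun u y => ?_⟩
  · refine ⟨1, fun _ => f (e k).1 (e k).2,
      fun _ => (Pi.single (e k).1 1 : Fin m → ℝ) r * c (e k).1 (e k).2, fun _ => θ (e k).1 (e k).2,
      fun u => ?_⟩
    simp only [a, Pi.smul_apply, smul_eq_mul, Fin.sum_univ_one]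
    ring
  · rw [e.sum_comp fun i => σ (ω i.1 i.2 ⬝ᵥ (y : Fin d → ℝ) + ζ i.1 i.2) • a i u,
      pi_norm_lt_iff hε]
    intro r
    refine lt_of_eq_of_lt ?_ (hn r u y)
    rw [Pi.sub_apply, Real.norm_eq_abs, Finset.sum_apply, Fintype.sum_sigma]
    simp [a, Pi.single_apply, mul_comm, mul_left_comm]

end Operator

theorem topological_deeponet_operator_approximation_general
    {X : Type*} [AddCommGroup X] [Module ℝ X] [TopologicalSpace X]
    [IsTopologicalAddGroup X] [ContinuousSMul ℝ X] [LocallyConvexSpace ℝ X] [T2Space X]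
    {d m : ℕ} (V : Set X) (hV : IsCompact V)
    (K : Set (Fin d → ℝ)) [CompactSpace K]
    (G : V → C(K, Fin m → ℝ)) (hG : Continuous G)
    (σ : ℝ → ℝ) (hσcont : Continuous σ) (hσ : TauberWiener σ)
    (ε : ℝ) (hε : 0 < ε) :
    ∃ (N : ℕ), 1 ≤ N ∧
      ∃ (ω : Fin N → Fin d → ℝ) (ζ : Fin N → ℝ) (a : Fin N → X → Fin m → ℝ),
        (∀ (k : Fin N) (r : Fin m),
          ∃ (n : ℕ) (f : Fin n → X →L[ℝ] ℝ) (c θ : Fin n → ℝ),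
            ∀ u : X, a k u r = ∑ i, c i * σ (f i u - θ i)) ∧
        ∀ (u : V) (y : K),
          ‖G u y - ∑ k, σ (ω k ⬝ᵥ (y : Fin d → ℝ) + ζ k) • a k (u : X)‖ < ε := by
  have : CompactSpace V := isCompact_iff_compactSpace.mp hV
  obtain ⟨N, ω, ζ, a, ha, happrox⟩ := exists_deepONet_near (σ := ⟨σ, hσcont⟩) hσ
    (ContinuousMap.uncurry ⟨G, hG⟩) hε
  -- a leading zero term makes `N ≥ 1`
  refine ⟨N + 1, by omega, Fin.cons 0 ω, Fin.cons 0 ζ, Fin.cons 0 a, fun k r => ?_,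
    fun u y => by simpa [Fin.sum_univ_succ] using happrox u y⟩
  refine Fin.cases ?_ (fun k => ha k r) k
  exact ⟨0, Fin.elim0, Fin.elim0, Fin.elim0, fun u => rfl⟩

/-- Main operator approximation theorem: a continuous operator from a compact subset of a
Hausdorff locally convex space into `C(K, ℝ^m)` is uniformly approximated by finite
separable expansions whose coefficient maps are single-hidden-layer topological neural
networks built from continuous linear functionals, and whose spatial factors are ridge
functions. -/
theorem topological_deeponet_operator_approximation
    {X : Type*} [AddCommGroup X] [Module ℝ X] [TopologicalSpace X]
    [IsTopologicalAddGroup X] [ContinuousSMul ℝ X] [LocallyConvexSpace ℝ X] [T2Space X]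
    {d m : ℕ} (V : Set X) (hV : IsCompact V)
    (K : Set (Fin d → ℝ)) [CompactSpace K] (hK : IsCompact K)
    (G : V → C(K, Fin m → ℝ)) (hG : Continuous G)
    (σ : ℝ → ℝ) (hσcont : Continuous σ) (hσ : TauberWiener σ)
    (ε : ℝ) (hε : 0 < ε) :
    ∃ (N : ℕ), 1 ≤ N ∧
      ∃ (ω : Fin N → Fin d → ℝ) (ζ : Fin N → ℝ) (a : Fin N → X → Fin m → ℝ),
        (∀ (k : Fin N) (r : Fin m),
          ∃ (n : ℕ) (f : Fin n → X →L[ℝ] ℝ) (c θ : Fin n → ℝ),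
            ∀ u : X, a k u r = ∑ i, c i * σ (f i u - θ i)) ∧
        ∀ (u : V) (y : K),
          ‖G u y - ∑ k, σ (ω k ⬝ᵥ (y : Fin d → ℝ) + ζ k) • a k (u : X)‖ < ε :=
  topological_deeponet_operator_approximation_general V hV K G hG σ hσcont hσ ε hε
end

section
/- (DeepONet corollary, scalar output) Let E be a Banach space, K₁ ⊆ E and K₂ ⊂ ℝ^d compact, V ⊆ C(K₁, ℝ) compact in the sup norm, G : V → C(K₂, ℝ) a continuous operator, and σ a continuous Tauber–Wiener function. Then for every ε > 0 there exist integers n, p, r ≥ 1, points x₁, …, x_r ∈ K₁, reals c_{ki}, θ_{ki}, ξ_{kij}, ζ_k, and vectors ω_k ∈ ℝ^d such that |G(u)(y) − Σ_{k=1}^p Σ_{i=1}^n c_{ki} σ(Σ_{j=1}^r ξ_{kij} u(xⱼ) − θ_{ki}) σ(ω_k·y + ζ_k)| < ε for all u ∈ V and y ∈ K₂. -/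
/-!
Stone–Weierstrass on the compact space `V × K₂`: the functions `(u, y) ↦ exp (f u) * exp (h y)`,
with `f` a linear combination of finitely many point evaluations `u ↦ u x` and `h y = ω ⬝ᵥ y`,
are closed under multiplication and separate points, so their span is dense. By the
Tauber–Wiener property applied on an interval containing the range of `f`, each factor
`exp ∘ f` is a uniform limit of sums `∑ cᵢ σ (wᵢ f - θᵢ)`, and likewise `exp ∘ h`; hence the span
of the products `σ (f u - θ) * σ (h y - ζ)` is dense as well. An approximant of `(u, y) ↦ G u y`
from this span uses finitely many sensor points, which we collect into `x₁, …, x_r`. Since the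
trunk parameters may differ from term to term, one branch unit per term (`n = 1`) suffices.
-/

open Matrix

section RidgeProducts

variable {X Y : Type*} [TopologicalSpace X] [TopologicalSpace Y]

def ridge (σ : C(ℝ, ℝ)) (f : C(X, ℝ)) (θ : ℝ) : C(X, ℝ) :=
  σ.comp (f - ContinuousMap.const X θ)

@[simp]
lemma ridge_apply (σ : C(ℝ, ℝ)) (f : C(X, ℝ)) (θ : ℝ) (x : X) : ridge σ f θ x = σ (f x - θ) :=
  rfl

def ridgeSet (σ : C(ℝ, ℝ)) (F : Submodule ℝ C(X, ℝ)) : Set C(X, ℝ) :=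
  {g | ∃ f ∈ F, ∃ θ : ℝ, g = ridge σ f θ}

lemma comp_mem_topologicalClosure_span_ridgeSet [CompactSpace X] {σ : C(ℝ, ℝ)}
    (hσ : TauberWiener σ) {F : Submodule ℝ C(X, ℝ)} (g : C(ℝ, ℝ)) {f : C(X, ℝ)} (hf : f ∈ F) :
    g.comp f ∈ (Submodule.span ℝ (ridgeSet σ F)).topologicalClosure := by
  rw [← SetLike.mem_coe, Submodule.topologicalClosure_coe, Metric.mem_closure_iff]
  intro ε hε
  obtain ⟨N, c, w, θ, hN⟩ := hσ (-‖f‖) ‖f‖ g g.continuous.continuousOn (ε / 2) (half_pos hε)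
  refine ⟨∑ i, c i • ridge σ (w i • f) (θ i), Submodule.sum_mem _ fun i _ =>
    Submodule.smul_mem _ _ (Submodule.subset_span ⟨_, F.smul_mem _ hf, _, rfl⟩), ?_⟩
  refine ((ContinuousMap.dist_le (half_pos hε).le).mpr fun x => ?_).trans_lt (half_lt_self hε)
  have hx : f x ∈ Set.Icc (-‖f‖) ‖f‖ := abs_le.mp (by simpa using f.norm_coe_le_norm x)
  simpa [Real.dist_eq] using (hN _ hx).le

variable (X Y) in
def extMul : C(X, ℝ) →ₗ[ℝ] C(Y, ℝ) →ₗ[ℝ] C(X × Y, ℝ) :=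
  (LinearMap.mul ℝ C(X × Y, ℝ)).compl₁₂
    (ContinuousMap.compStarAlgHom' ℝ ℝ ContinuousMap.fst).toLinearMap
    (ContinuousMap.compStarAlgHom' ℝ ℝ ContinuousMap.snd).toLinearMap

@[simp]
lemma extMul_apply (φ : C(X, ℝ)) (ψ : C(Y, ℝ)) (p : X × Y) :
    extMul X Y φ ψ p = φ p.1 * ψ p.2 :=
  rfl

lemma continuous_extMul [CompactSpace X] [CompactSpace Y] :
    Continuous fun q : C(X, ℝ) × C(Y, ℝ) => extMul X Y q.1 q.2 :=
  ((ContinuousMap.continuous_precomp _).comp continuous_fst).mul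
    ((ContinuousMap.continuous_precomp _).comp continuous_snd)

noncomputable def expMap : C(ℝ, ℝ) :=
  ⟨Real.exp, Real.continuous_exp⟩

def expProducts (F : Submodule ℝ C(X, ℝ)) (H : Submodule ℝ C(Y, ℝ)) : Submonoid C(X × Y, ℝ) where
  carrier := {g | ∃ f ∈ F, ∃ h ∈ H,
    g = extMul X Y (expMap.comp f) (expMap.comp h)}
  mul_mem' := by
    rintro _ _ ⟨f, hf, h, hh, rfl⟩ ⟨f', hf', h', hh', rfl⟩
    refine ⟨f + f', F.add_mem hf hf', h + h', H.add_mem hh hh', ?_⟩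
    ext p
    simp [expMap, Real.exp_add]
    ring
  one_mem' := ⟨0, F.zero_mem, 0, H.zero_mem, by ext; simp [expMap]⟩

lemma separatesPoints_adjoin_expProducts {F : Submodule ℝ C(X, ℝ)} {H : Submodule ℝ C(Y, ℝ)}
    (hF : Set.SeparatesPoints ((⇑) '' (F : Set C(X, ℝ))))
    (hH : Set.SeparatesPoints ((⇑) '' (H : Set C(Y, ℝ)))) :
    (Algebra.adjoin ℝ (expProducts F H : Set C(X × Y, ℝ))).SeparatesPoints := by
  have mem : ∀ {f h}, f ∈ F → h ∈ H →
      ⇑(extMul X Y (expMap.comp f) (expMap.comp h)) ∈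
        (⇑) '' (Algebra.adjoin ℝ (expProducts F H : Set C(X × Y, ℝ)) : Set C(X × Y, ℝ)) :=
    fun hf hh => ⟨_, Algebra.subset_adjoin ⟨_, hf, _, hh, rfl⟩, rfl⟩
  rintro ⟨x, y⟩ ⟨x', y'⟩ hne
  by_cases hx : x = x'
  · obtain ⟨_, ⟨h, hh, rfl⟩, hy⟩ := hH fun hy => hne (Prod.ext hx hy)
    exact ⟨_, mem F.zero_mem hh, by simpa [expMap, hx] using hy⟩
  · obtain ⟨_, ⟨f, hf, rfl⟩, hfx⟩ := hF hx
    exact ⟨_, mem hf H.zero_mem, by simpa [expMap] using hfx⟩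

def ridgeProductSpan (σ : C(ℝ, ℝ)) (F : Submodule ℝ C(X, ℝ)) (H : Submodule ℝ C(Y, ℝ)) :
    Submodule ℝ C(X × Y, ℝ) :=
  Submodule.map₂ (extMul X Y) (Submodule.span ℝ (ridgeSet σ F)) (Submodule.span ℝ (ridgeSet σ H))

theorem ridgeProductSpan_topologicalClosure_eq_top [CompactSpace X] [CompactSpace Y]
    {σ : C(ℝ, ℝ)} (hσ : TauberWiener σ) {F : Submodule ℝ C(X, ℝ)} {H : Submodule ℝ C(Y, ℝ)}
    (hF : Set.SeparatesPoints ((⇑) '' (F : Set C(X, ℝ))))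
    (hH : Set.SeparatesPoints ((⇑) '' (H : Set C(Y, ℝ)))) :
    (ridgeProductSpan σ F H).topologicalClosure = ⊤ := by
  set A := Algebra.adjoin ℝ (expProducts F H : Set C(X × Y, ℝ))
  have hexp : ∀ g ∈ expProducts F H, g ∈ (ridgeProductSpan σ F H).topologicalClosure := by
    rintro _ ⟨f, hf, h, hh, rfl⟩
    exact map_mem_closure₂ (f := fun φ ψ => extMul X Y φ ψ) continuous_extMul
      (comp_mem_topologicalClosure_span_ridgeSet hσ _ hf)
      (comp_mem_topologicalClosure_span_ridgeSet hσ _ hh)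
      fun φ hφ ψ hψ => Submodule.apply_mem_map₂ _ hφ hψ
  have hA : (A : Set C(X × Y, ℝ)) ⊆ (ridgeProductSpan σ F H).topologicalClosure := by
    change (Subalgebra.toSubmodule A : Set C(X × Y, ℝ)) ⊆ _
    rw [Algebra.adjoin_eq_span, Submonoid.closure_eq]
    exact Submodule.span_le.mpr hexp
  have hAdense := ContinuousMap.subalgebra_topologicalClosure_eq_top_of_separatesPoints A
    (separatesPoints_adjoin_expProducts hF hH)
  rw [eq_top_iff]
  intro g _
  have hg : g ∈ A.topologicalClosure := hAdense ▸ Algebra.mem_top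
  exact closure_minimal hA (Submodule.isClosed_topologicalClosure _) hg

lemma exists_pos_fin_sum_smul_of_mem_span {R M : Type*} [Semiring R] [AddCommMonoid M]
    [Module R M] {s : Set M} (hs : s.Nonempty) {m : M} (hm : m ∈ Submodule.span R s) :
    ∃ (n : ℕ) (a : Fin n → R) (g : Fin n → s), 1 ≤ n ∧ ∑ i, a i • (g i : M) = m := by
  obtain ⟨n, a, g, rfl⟩ := Submodule.mem_span_set'.mp hm
  exact ⟨n + 1, Fin.cons 0 a, Fin.cons ⟨_, hs.some_mem⟩ g, n.succ_pos, by simp [Fin.sum_univ_succ]⟩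

lemma exists_sum_of_mem_ridgeProductSpan {σ : C(ℝ, ℝ)} {F : Submodule ℝ C(X, ℝ)}
    {H : Submodule ℝ C(Y, ℝ)} {Φ : C(X × Y, ℝ)} (hΦ : Φ ∈ ridgeProductSpan σ F H) :
    ∃ (p : ℕ) (a θ ζ : Fin p → ℝ) (f : Fin p → C(X, ℝ)) (h : Fin p → C(Y, ℝ)),
      1 ≤ p ∧ (∀ k, f k ∈ F) ∧ (∀ k, h k ∈ H) ∧
        ∀ x y, Φ (x, y) = ∑ k, a k * σ (f k x - θ k) * σ (h k y - ζ k) := by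
  rw [ridgeProductSpan, Submodule.map₂_span_span] at hΦ
  have h0F : ridge σ 0 0 ∈ ridgeSet σ F := ⟨0, F.zero_mem, 0, rfl⟩
  have h0H : ridge σ 0 0 ∈ ridgeSet σ H := ⟨0, H.zero_mem, 0, rfl⟩
  obtain ⟨p, a, g, hp, rfl⟩ := exists_pos_fin_sum_smul_of_mem_span
    ⟨_, Set.mem_image2_of_mem h0F h0H⟩ hΦ
  have hg : ∀ k, ∃ f ∈ F, ∃ θ, ∃ h ∈ H, ∃ ζ,
      (g k : C(X × Y, ℝ)) = extMul X Y (ridge σ f θ) (ridge σ h ζ) := by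
    intro k
    obtain ⟨φ, ⟨f, hf, θ, hφ⟩, ψ, ⟨h, hh, ζ, hψ⟩, hk⟩ := (g k).2
    exact ⟨f, hf, θ, h, hh, ζ, by rw [← hk, hφ, hψ]⟩
  choose f hf θ h hh ζ hg using hg
  refine ⟨p, a, θ, ζ, f, h, hp, hf, hh, fun x y => ?_⟩
  simp only [ContinuousMap.sum_apply, ContinuousMap.smul_apply, hg, extMul_apply, ridge_apply,
    smul_eq_mul, mul_assoc]

end RidgeProducts

section Sensors

variable {K : Type*} [TopologicalSpace K]

def sensorEval (V : Set C(K, ℝ)) (x : K) : C(V, ℝ) :=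
  ⟨fun u => (u : C(K, ℝ)) x, by fun_prop⟩

noncomputable def sensorFeatures (V : Set C(K, ℝ)) : Submodule ℝ C(V, ℝ) :=
  LinearMap.range (Finsupp.linearCombination ℝ (sensorEval V))

lemma separatesPoints_sensorFeatures (V : Set C(K, ℝ)) :
    Set.SeparatesPoints ((⇑) '' (sensorFeatures V : Set C(V, ℝ))) := by
  intro u v huv
  obtain ⟨x, hx⟩ := DFunLike.ne_iff.mp (Subtype.coe_injective.ne huv)
  exact ⟨_, ⟨sensorEval V x, ⟨Finsupp.single x 1, by simp⟩, rfl⟩, hx⟩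

lemma exists_common_sensors [Nonempty K] {V : Set C(K, ℝ)} {ι : Type*} [Fintype ι]
    {f : ι → C(V, ℝ)} (hf : ∀ i, f i ∈ sensorFeatures V) :
    ∃ (r : ℕ) (x : Fin r → K) (ξ : ι → Fin r → ℝ), 1 ≤ r ∧
      ∀ i u, f i u = ∑ j, ξ i j * (u : C(K, ℝ)) (x j) := by
  classical
  choose l hl using hf
  set T := insert (Classical.arbitrary K) (Finset.univ.biUnion fun i => (l i).support)
  refine ⟨T.card, fun j => T.equivFin.symm j, fun i j => l i (T.equivFin.symm j),
    Finset.card_pos.mpr (Finset.insert_nonempty _ _), fun i u => ?_⟩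
  have hsupp : (l i).support ⊆ T :=
    (Finset.subset_biUnion_of_mem (fun i => (l i).support) (Finset.mem_univ i)).trans
      (Finset.subset_insert _ _)
  rw [← hl, Finsupp.linearCombination_apply, Finsupp.sum_of_support_subset _ hsupp _ (by simp),
    ContinuousMap.sum_apply, ← Finset.sum_coe_sort T]
  exact (T.equivFin.symm.sum_comp fun z : T => l i z * (u : C(K, ℝ)) z).symm

end Sensors

def dotFeatures {d : ℕ} (K : Set (Fin d → ℝ)) : (Fin d → ℝ) →ₗ[ℝ] C(K, ℝ) where
  toFun ω := ⟨fun y => ω ⬝ᵥ (y : Fin d → ℝ), by fun_prop⟩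
  map_add' ω ω' := by ext; simp [add_dotProduct]
  map_smul' c ω := by ext; simp [smul_dotProduct]

lemma separatesPoints_range_dotFeatures {d : ℕ} (K : Set (Fin d → ℝ)) :
    Set.SeparatesPoints ((⇑) '' (LinearMap.range (dotFeatures K) : Set C(K, ℝ))) := by
  intro y y' hyy
  obtain ⟨j, hj⟩ := Function.ne_iff.mp (Subtype.coe_injective.ne hyy)
  exact ⟨_, ⟨_, ⟨Pi.single j 1, rfl⟩, rfl⟩, by simpa [dotFeatures] using hj⟩

theorem deeponet_scalar_corollary_general
    {E : Type*} [NormedAddCommGroup E]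
    {d : ℕ} (K₁ : Set E) [Nonempty K₁]
    (K₂ : Set (Fin d → ℝ)) [CompactSpace K₂]
    (V : Set C(K₁, ℝ)) (hV : IsCompact V)
    (G : V → C(K₂, ℝ)) (hG : Continuous G)
    (σ : ℝ → ℝ) (hσcont : Continuous σ) (hσ : TauberWiener σ)
    (ε : ℝ) (hε : 0 < ε) :
    ∃ (n p r : ℕ), 1 ≤ n ∧ 1 ≤ p ∧ 1 ≤ r ∧
      ∃ (x : Fin r → K₁) (c θ : Fin p → Fin n → ℝ)
        (ξ : Fin p → Fin n → Fin r → ℝ) (ζ : Fin p → ℝ) (ω : Fin p → Fin d → ℝ),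
        ∀ (u : V) (y : K₂),
          |G u y -
            ∑ k, ∑ i, c k i *
              σ (∑ j, ξ k i j * (u : C(K₁, ℝ)) (x j) - θ k i) *
              σ (ω k ⬝ᵥ (y : Fin d → ℝ) + ζ k)| < ε := by
  have : CompactSpace V := isCompact_iff_compactSpace.mp hV
  let G' : C(V × K₂, ℝ) := ⟨fun q => G q.1 q.2, by fun_prop⟩
  have hdense := ridgeProductSpan_topologicalClosure_eq_top (σ := ⟨σ, hσcont⟩) hσ
    (separatesPoints_sensorFeatures V) (separatesPoints_range_dotFeatures K₂)
  obtain ⟨Φ, hΦ, hGΦ⟩ := Metric.mem_closure_iff.mp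
    (hdense ▸ Submodule.mem_top : G' ∈ (ridgeProductSpan _ _ _).topologicalClosure) ε hε
  obtain ⟨p, a, θ, ζ, f, h, hp, hf, hh, hΦ⟩ := exists_sum_of_mem_ridgeProductSpan hΦ
  obtain ⟨r, x, ξ, hr, hfx⟩ := exists_common_sensors hf
  choose ω hω using hh
  refine ⟨1, p, r, le_rfl, hp, hr, x, fun k _ => a k, fun k _ => θ k, fun k _ => ξ k,
    fun k => -ζ k, ω, fun u y => ?_⟩
  have := (ContinuousMap.dist_apply_le_dist (u, y)).trans_lt hGΦ
  simpa [G', hΦ, hfx, ← hω, dotFeatures, sub_eq_add_neg, Real.dist_eq] using this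

/-- DeepONet corollary (scalar output, Chen–Chen/Lu form): explicit branch–trunk
approximation with sensor values `u(x₁), …, u(x_r)` and ridge trunk factors. -/
theorem deeponet_scalar_corollary
    {E : Type*} [NormedAddCommGroup E] [NormedSpace ℝ E]
    {d : ℕ} (K₁ : Set E) [CompactSpace K₁] [Nonempty K₁] (hK₁ : IsCompact K₁)
    (K₂ : Set (Fin d → ℝ)) [CompactSpace K₂] (hK₂ : IsCompact K₂)
    (V : Set C(K₁, ℝ)) (hV : IsCompact V)
    (G : V → C(K₂, ℝ)) (hG : Continuous G)
    (σ : ℝ → ℝ) (hσcont : Continuous σ) (hσ : TauberWiener σ)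
    (ε : ℝ) (hε : 0 < ε) :
    ∃ (n p r : ℕ), 1 ≤ n ∧ 1 ≤ p ∧ 1 ≤ r ∧
      ∃ (x : Fin r → K₁) (c θ : Fin p → Fin n → ℝ)
        (ξ : Fin p → Fin n → Fin r → ℝ) (ζ : Fin p → ℝ) (ω : Fin p → Fin d → ℝ),
        ∀ (u : V) (y : K₂),
          |G u y -
            ∑ k, ∑ i, c k i *
              σ (∑ j, ξ k i j * (u : C(K₁, ℝ)) (x j) - θ k i) *
              σ (ω k ⬝ᵥ (y : Fin d → ℝ) + ζ k)| < ε :=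
  deeponet_scalar_corollary_general K₁ K₂ V hV G hG σ hσcont hσ ε hε
end

section
/- (Dot-product DeepONet corollary) Let E be a Banach space, K₁ ⊆ E and K₂ ⊂ ℝ^d compact, V ⊆ C(K₁, ℝ) compact, G : V → C(K₂, ℝ) continuous, and σ a continuous Tauber–Wiener function. Then for every ε > 0 there exist r, p ≥ 1, points x₁, …, x_r ∈ K₁, and continuous maps ℬ : ℝ^r → ℝ^p and 𝒯 : ℝ^d → ℝ^p such that |G(u)(y) − ⟨ℬ(u(x₁), …, u(x_r)), 𝒯(y)⟩| < ε for all u ∈ V and y ∈ K₂. -/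
open Matrix

/-!
Compact subsets of `C(K₁, ℝ)` are equicontinuous, so the values of `u ∈ V` at finitely many
sensors `x₁, …, x_r` determine `u` uniformly up to a small error, hence determine `G u` up to
`ε / 2` by uniform continuity of `G`. A partition of unity `β` on `ℝ^r` subordinate to small balls
around the sensor vectors of finitely many `u₁, …, u_p ∈ V` makes `∑ₖ βₖ(u(x)) • G(uₖ)` a convex
combination of points `ε / 2`-close to `G u`. Extending each `G(uₖ)` from `K₂` to `ℝ^d` (Tietze)
gives `𝒯 = (G(u₁), …, G(u_p))`, and `ℬ(u(x)) ⬝ᵥ 𝒯(y)` is that convex combination evaluated at `y`.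
-/

open Set Filter Topology Metric

theorem CompactSpace.exists_fin_cover_of_mem_nhds {X : Type*} [TopologicalSpace X]
    [CompactSpace X] (U : X → Set X) (hU : ∀ x, U x ∈ 𝓝 x) :
    ∃ (n : ℕ) (c : Fin n → X), ∀ y, ∃ k, y ∈ U (c k) := by
  obtain ⟨t, ht⟩ := finite_cover_nhds hU
  refine ⟨t.card, fun k => t.equivFin.symm k, fun y => ?_⟩
  obtain ⟨c, hc, hy⟩ := mem_iUnion₂.mp (ht.symm ▸ mem_univ y)
  exact ⟨t.equivFin ⟨c, hc⟩, by simpa using hy⟩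

theorem IsCompact.equicontinuous_coe {X Y : Type*} [TopologicalSpace X] [CompactSpace X]
    [PseudoMetricSpace Y] {V : Set C(X, Y)} (hV : IsCompact V) :
    Equicontinuous fun u : V => ((u : C(X, Y)) : X → Y) := by
  intro x₀
  rw [Metric.equicontinuousAt_iff_right]
  intro η hη
  have hcont : Continuous fun z : X × C(X, Y) => dist (z.2 x₀) (z.2 z.1) :=
    ((continuous_eval_const x₀).comp continuous_snd).dist (continuous_snd.eval continuous_fst)
  have hnear : ∀ u ∈ V, ∀ᶠ z : X × C(X, Y) in 𝓝 (x₀, u), dist (z.2 x₀) (z.2 z.1) < η :=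
    fun u _ => hcont.continuousAt.eventually (gt_mem_nhds (by simpa using hη))
  simpa only [Subtype.forall] using hV.eventually_forall_of_forall_eventually hnear

theorem IsCompact.exists_fin_points_dist_lt_of_dist_apply_lt {X Y : Type*}
    [TopologicalSpace X] [CompactSpace X] [Nonempty X] [PseudoMetricSpace Y]
    {V : Set C(X, Y)} (hV : IsCompact V) {η : ℝ} (hη : 0 < η) :
    ∃ (r : ℕ) (x : Fin r → X), 0 < r ∧
      ∀ u ∈ V, ∀ w ∈ V, (∀ j, dist (u (x j)) (w (x j)) < η) → dist u w < 3 * η := by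
  obtain ⟨r, x, hx⟩ := CompactSpace.exists_fin_cover_of_mem_nhds
    (fun x₀ => {x | ∀ u ∈ V, dist (u x₀) (u x) < η}) fun x₀ =>
      (Metric.equicontinuousAt_iff_right.mp (hV.equicontinuous_coe x₀) η hη).mono
        fun _ h u hu => h ⟨u, hu⟩
  refine ⟨r, x, (hx (Classical.arbitrary X)).choose.pos, fun u hu w hw hsensor => ?_⟩
  refine ContinuousMap.dist_lt_of_nonempty fun y => ?_
  obtain ⟨j, hj⟩ := hx y
  calc dist (u y) (w y)
      ≤ dist (u (x j)) (u y) + dist (u (x j)) (w (x j)) + dist (w (x j)) (w y) := by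
        rw [dist_comm (u (x j))]; exact dist_triangle4 _ _ _ _
    _ < η + η + η := by gcongr <;> [exact hj u hu; exact hsensor j; exact hj w hw]
    _ = 3 * η := by ring

theorem exists_continuous_weights_dist_sum_smul_le {V A F : Type*} [TopologicalSpace V]
    [CompactSpace V] [Nonempty V] [MetricSpace A] [SeminormedAddCommGroup F] [NormedSpace ℝ F]
    {Φ : V → A} (hΦ : Continuous Φ) (g : V → F) {η ε : ℝ} (hη : 0 < η)
    (hg : ∀ u w, dist (Φ u) (Φ w) < η → dist (g u) (g w) ≤ ε) :
    ∃ (p : ℕ) (w : Fin p → V) (β : A → Fin p → ℝ), 0 < p ∧ Continuous β ∧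
      ∀ u, dist (∑ k, β (Φ u) k • g (w k)) (g u) ≤ ε := by
  obtain ⟨p, w, hw⟩ := CompactSpace.exists_fin_cover_of_mem_nhds
    (fun v => Φ ⁻¹' ball (Φ v) η) fun v => hΦ.continuousAt.preimage_mem_nhds (ball_mem_nhds _ hη)
  obtain ⟨β, hβ⟩ := PartitionOfUnity.exists_isSubordinate (isCompact_range hΦ).isClosed
    (fun k => ball (Φ (w k)) η) (fun _ => isOpen_ball) fun _ ⟨u, hu⟩ => hu ▸ mem_iUnion.mpr (hw u)
  refine ⟨p, w, fun a k => β k a, (hw (Classical.arbitrary V)).choose.pos,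
    continuous_pi fun k => (β k).continuous, fun u => ?_⟩
  have hmem := β.finsum_smul_mem_convex (g := fun k _ => g (w k)) (mem_range_self u)
    (t := closedBall (g u) ε) (fun k hk => by
      rw [mem_closedBall, dist_comm]
      exact hg u (w k) (mem_ball.mp (hβ k (subset_closure hk))))
    (convex_closedBall _ _)
  rwa [finsum_eq_sum_of_fintype, mem_closedBall] at hmem

theorem deeponet_dot_product_corollary_general
    {E : Type*} [NormedAddCommGroup E]
    {d : ℕ} (K₁ : Set E) [CompactSpace K₁] [Nonempty K₁]
    (K₂ : Set (Fin d → ℝ)) [CompactSpace K₂]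
    (V : Set C(K₁, ℝ)) (hV : IsCompact V)
    (G : V → C(K₂, ℝ)) (hG : Continuous G)
    (ε : ℝ) (hε : 0 < ε) :
    ∃ (r p : ℕ), 1 ≤ r ∧ 1 ≤ p ∧
      ∃ (x : Fin r → K₁) (ℬ : (Fin r → ℝ) → Fin p → ℝ) (𝒯 : (Fin d → ℝ) → Fin p → ℝ),
        Continuous ℬ ∧ Continuous 𝒯 ∧
        ∀ (u : V) (y : K₂),
          |G u y - ℬ (fun j => (u : C(K₁, ℝ)) (x j)) ⬝ᵥ 𝒯 (y : Fin d → ℝ)| < ε := by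
  rcases isEmpty_or_nonempty V with _ | _
  · exact ⟨1, 1, le_rfl, le_rfl, fun _ => Classical.arbitrary _, 0, 0, continuous_const,
      continuous_const, fun u => isEmptyElim u⟩
  have : CompactSpace V := isCompact_iff_compactSpace.mp hV
  obtain ⟨δ, hδ, hGδ⟩ := Metric.uniformContinuous_iff.mp
    (CompactSpace.uniformContinuous_of_continuous hG) (ε / 2) (half_pos hε)
  obtain ⟨r, x, hr, hx⟩ :=
    hV.exists_fin_points_dist_lt_of_dist_apply_lt (η := δ / 3) (by positivity)
  set Φ : V → Fin r → ℝ := fun u j => (u : C(K₁, ℝ)) (x j)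
  have hΦ : Continuous Φ := by fun_prop
  have hclose : ∀ u w, dist (Φ u) (Φ w) < δ / 3 → dist (G u) (G w) ≤ ε / 2 := fun u w h =>
    (hGδ (by
      have := hx u u.2 w w.2 ((dist_pi_lt_iff (by positivity)).mp h)
      rw [Subtype.dist_eq]; linarith)).le
  obtain ⟨p, w, β, hp, hβ, hβG⟩ := exists_continuous_weights_dist_sum_smul_le hΦ G
    (by positivity) hclose
  choose T hT using fun k => ContinuousMap.exists_restrict_eq
    (isCompact_iff_compactSpace.mpr ‹CompactSpace K₂›).isClosed (G (w k))
  refine ⟨r, p, hr, hp, x, β, fun y k => T k y, hβ, by fun_prop, fun u y => ?_⟩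
  have hdot : β (Φ u) ⬝ᵥ (fun k => T k y) = (∑ k, β (Φ u) k • G (w k)) y := by
    simp [dotProduct, ← hT]
  calc |G u y - β (Φ u) ⬝ᵥ fun k => T k y|
      = dist ((∑ k, β (Φ u) k • G (w k)) y) (G u y) := by rw [hdot, Real.dist_eq, abs_sub_comm]
    _ ≤ ε / 2 := (ContinuousMap.dist_apply_le_dist y).trans (hβG u)
    _ < ε := half_lt_self hε

/-- Dot-product DeepONet corollary: continuous branch and trunk maps whose Euclidean
inner product uniformly approximates the operator `G` through finitely many sensor
values `u(x₁), …, u(x_r)`. -/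
theorem deeponet_dot_product_corollary
    {E : Type*} [NormedAddCommGroup E] [NormedSpace ℝ E]
    {d : ℕ} (K₁ : Set E) [CompactSpace K₁] [Nonempty K₁] (hK₁ : IsCompact K₁)
    (K₂ : Set (Fin d → ℝ)) [CompactSpace K₂] (hK₂ : IsCompact K₂)
    (V : Set C(K₁, ℝ)) (hV : IsCompact V)
    (G : V → C(K₂, ℝ)) (hG : Continuous G)
    (σ : ℝ → ℝ) (hσcont : Continuous σ) (hσ : TauberWiener σ)
    (ε : ℝ) (hε : 0 < ε) :
    ∃ (r p : ℕ), 1 ≤ r ∧ 1 ≤ p ∧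
      ∃ (x : Fin r → K₁) (ℬ : (Fin r → ℝ) → Fin p → ℝ) (𝒯 : (Fin d → ℝ) → Fin p → ℝ),
        Continuous ℬ ∧ Continuous 𝒯 ∧
        ∀ (u : V) (y : K₂),
          |G u y - ℬ (fun j => (u : C(K₁, ℝ)) (x j)) ⬝ᵥ 𝒯 (y : Fin d → ℝ)| < ε :=
  deeponet_dot_product_corollary_general K₁ K₂ V hV G hG ε hε
end
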